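/- Let p ≥ 2 and let D be a Gauss diagram of a virtual knot or link admitting a mod p Alexander numbering. Then the quotient of the reduced virtual knot group Ḡ_D by the normal closure of v^p is isomorphic to the free product G_D * (ℤ/pℤ). -/

import Mathlib

noncomputable section

open scoped Classical

/-- A Gauss diagram: a finite set of chords, each with an arrowhead (`Sum.inl c`,
the under-crossing passage) and an arrowtail (`Sum.inr c`, the over-crossing passage)
and a sign (`true` = +1, `false` = −1); the endpoints are arranged on a disjoint
union of oriented circles, recorded by the successor permutation `next`. -/
structure GaussDiagram where
  Chord : Type
  [chordFintype : Fintype Chord]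
  [chordDecEq : DecidableEq Chord]
  next : Equiv.Perm (Chord ⊕ Chord)
  sign : Chord → Bool

attribute [instance] GaussDiagram.chordFintype GaussDiagram.chordDecEq

namespace GaussDiagram

variable (D : GaussDiagram)

/-- Endpoints of the diagram; `Sum.inl c` is the arrowhead of `c`, `Sum.inr c` its arrowtail. -/
abbrev Endpoint : Type := D.Chord ⊕ D.Chord

/-- Short arcs, indexed by their terminal endpoint: the arc `x` runs from the
preceding endpoint to the endpoint `x`. -/
abbrev Arc : Type := D.Endpoint

def head (c : D.Chord) : D.Endpoint := Sum.inl c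
def tail (c : D.Chord) : D.Endpoint := Sum.inr c

/-- incoming under-crossing short arc at a chord -/
def ui (c : D.Chord) : D.Arc := Sum.inl c
/-- outgoing under-crossing short arc at a chord -/
def uo (c : D.Chord) : D.Arc := D.next (Sum.inl c)
/-- incoming over-crossing short arc at a chord -/
def oi (c : D.Chord) : D.Arc := Sum.inr c
/-- outgoing over-crossing short arc at a chord -/
def oo (c : D.Chord) : D.Arc := D.next (Sum.inr c)

/-- the sign of a chord, as an integer -/
def sgn (c : D.Chord) : ℤ := if D.sign c then 1 else -1

/-- A mod `p` Alexander numbering of a Gauss diagram (`p = 0` meaning integer valued,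
  via `ZMod 0 = ℤ`): at each chord, if `a → c` is the passage of the strand crossed from
  left to right by the other strand `b → d`, then `λ(a) = λ(d)` and
  `λ(b) = λ(c) = λ(a) − 1`.  For a positive chord the strand crossed from left to right
  is the over strand, for a negative chord it is the under strand. -/
def IsAlexanderNumbering (p : ℕ) (lam : D.Arc → ZMod p) : Prop :=
  ∀ c : D.Chord,
    if D.sign c then
      lam (D.oi c) = lam (D.uo c) ∧ lam (D.ui c) = lam (D.oo c) ∧
        lam (D.ui c) = lam (D.oi c) - 1
    else
      lam (D.ui c) = lam (D.oo c) ∧ lam (D.oi c) = lam (D.uo c) ∧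
        lam (D.oi c) = lam (D.ui c) - 1

/-! ### The reduced virtual knot group -/

/-- Generators of the reduced virtual knot group: one generator for each short arc,
together with the extra generator `v = Sum.inr ()`. -/
abbrev RGen : Type := D.Arc ⊕ Unit

/-- the generator `v` -/
def gv : FreeGroup D.RGen := FreeGroup.of (Sum.inr ())
/-- the generator of a short arc -/
def ga (x : D.Arc) : FreeGroup D.RGen := FreeGroup.of (Sum.inl x)

/-- Relator at the over passage of a chord: for a positive chord with incoming over-arc
`b = oi` and outgoing over-arc `d = oo`, the relation `d = v b v⁻¹`; for a negative chord
the same with incoming and outgoing arcs interchanged. -/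
def redRelOver (c : D.Chord) : FreeGroup D.RGen :=
  if D.sign c then
    D.ga (D.oo c) * (D.gv * D.ga (D.oi c) * (D.gv)⁻¹)⁻¹
  else
    D.ga (D.oi c) * (D.gv * D.ga (D.oo c) * (D.gv)⁻¹)⁻¹

/-- Relator at the under passage of a chord: for a positive chord with incoming under-arc
`a = ui`, incoming over-arc `b = oi`, outgoing under-arc `c = uo`, the relation
`c = b v⁻¹ a v b⁻¹`; for a negative chord the same with incoming and outgoing arcs
interchanged. -/
def redRelUnder (c : D.Chord) : FreeGroup D.RGen :=
  if D.sign c then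
    D.ga (D.uo c) *
      (D.ga (D.oi c) * (D.gv)⁻¹ * D.ga (D.ui c) * D.gv * (D.ga (D.oi c))⁻¹)⁻¹
  else
    D.ga (D.ui c) *
      (D.ga (D.oo c) * (D.gv)⁻¹ * D.ga (D.uo c) * D.gv * (D.ga (D.oo c))⁻¹)⁻¹

def redRels : Set (FreeGroup D.RGen) :=
  {r | ∃ c : D.Chord, r = D.redRelOver c ∨ r = D.redRelUnder c}

/-- The reduced virtual knot group `Ḡ_D` of a Gauss diagram. -/
def RedGroup : Type := PresentedGroup D.redRels

instance : Group D.RedGroup := inferInstanceAs (Group (PresentedGroup D.redRels))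

/-- the image of a generator in the reduced virtual knot group -/
def redOf (x : D.RGen) : D.RedGroup := PresentedGroup.of x

/-! ### The knot group -/

/-- Two endpoints generate the same long arc when they are separated only by an
arrowtail: the short arc ending at an arrowtail and the following short arc belong to
the same long arc. -/
def tailRel : D.Endpoint → D.Endpoint → Prop :=
  fun x y => ∃ c : D.Chord, x = Sum.inr c ∧ y = D.next (Sum.inr c)

/-- Long arcs: maximal arcs between consecutive arrowheads, i.e. equivalence classes of
short arcs under merging across arrowtails. -/
def LongArc : Type := Quotient (Relation.EqvGen.setoid D.tailRel)

/-- the long arc containing a given short arc -/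
def la (x : D.Endpoint) : D.LongArc := Quotient.mk _ x

/-- Wirtinger relator of a chord: `c = b^ε a b^{−ε}` where `a` is the incoming and `c`
the outgoing long arc at the arrowhead, and `b` is the long arc through the arrowtail. -/
def knotRel (c : D.Chord) : FreeGroup D.LongArc :=
  FreeGroup.of (D.la (D.next (Sum.inl c))) *
    (FreeGroup.of (D.la (Sum.inr c)) ^ D.sgn c * FreeGroup.of (D.la (Sum.inl c)) *
        FreeGroup.of (D.la (Sum.inr c)) ^ (-D.sgn c))⁻¹

def knotRels : Set (FreeGroup D.LongArc) := Set.range D.knotRel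

/-- The knot group `G_D` of a Gauss diagram (Wirtinger presentation on long arcs). -/
def KnotGroup : Type := PresentedGroup D.knotRels

instance : Group D.KnotGroup := inferInstanceAs (Group (PresentedGroup D.knotRels))

end GaussDiagram

/-!
In `Ḡ_D / ⟨⟨v^p⟩⟩` the powers `v^k` make sense for `k : ℤ/p`, and conjugating each short-arc
generator `a` by `v^λ(a)` turns the relations of `Ḡ_D` into those of `G_D`: at every chord the
over relation says that the twisted generators agree across the arrowtail, so they only depend
on the long arc, and the under relation becomes the Wirtinger relation `c = b^ε a b^-ε`. The
Alexander numbering conditions are exactly what makes the powers of `v` cancel. Hence, writing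
`[a]` for the long arc through `a` and `t` for the generator of `ℤ/p`, the assignments
`[a] ↦ v^λ(a) a v^-λ(a)`, `t ↦ v` and `a ↦ t^-λ(a) [a] t^λ(a)`, `v ↦ t` define mutually inverse
homomorphisms between `G_D * ℤ/p` and `Ḡ_D / ⟨⟨v^p⟩⟩`.
-/

theorem eq_one_iff_of_mul_inv_eq_conj {G : Type*} [Group G] {r a b g : G}
    (e : a * b⁻¹ = g * r * g⁻¹) : r = 1 ↔ a = b := by
  rw [← mul_inv_eq_one (a := a), e, conj_eq_one_iff]

section ZModPow

variable {G : Type*} [Group G] {p : ℕ}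

def zmodPowHom (g : G) (hg : g ^ p = 1) : Multiplicative (ZMod p) →* G :=
  AddMonoidHom.toMultiplicativeLeft <|
    ZMod.lift p ⟨zmultiplesHom _ (Additive.ofMul g), by
      rw [zmultiplesHom_apply, natCast_zsmul, ← ofMul_pow, hg, ofMul_one]⟩

theorem zmodPowHom_ofAdd_intCast (g : G) (hg : g ^ p = 1) (n : ℤ) :
    zmodPowHom g hg (Multiplicative.ofAdd (n : ZMod p)) = g ^ n := by
  simp [zmodPowHom, ZMod.lift_coe]

theorem zmodPowHom_ofAdd_one (g : G) (hg : g ^ p = 1) :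
    zmodPowHom g hg (Multiplicative.ofAdd 1) = g := by
  simpa using zmodPowHom_ofAdd_intCast g hg 1

theorem MonoidHom.ext_multiplicative_zmod {f f' : Multiplicative (ZMod p) →* G}
    (h : f (Multiplicative.ofAdd 1) = f' (Multiplicative.ofAdd 1)) : f = f' := by
  refine MonoidHom.ext fun a => ?_
  obtain ⟨n, hn⟩ := ZMod.intCast_surjective (Multiplicative.toAdd a)
  have ha : a = Multiplicative.ofAdd (1 : ZMod p) ^ n := by rw [← ofAdd_zsmul, zsmul_one, hn]; rfl
  rw [ha, map_zpow, map_zpow, h]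

theorem MonoidHom.map_ofAdd_sub_one (χ : Multiplicative (ZMod p) →* G) (m : ZMod p) :
    χ (.ofAdd (m - 1)) = χ (.ofAdd m) * (χ (.ofAdd 1))⁻¹ := by
  rw [sub_eq_add_neg, ofAdd_add, map_mul, ofAdd_neg, map_inv]

end ZModPow

section Twist

variable {α G H : Type*} [Group G] [Group H] {p : ℕ} (χ : Multiplicative (ZMod p) →* G)

def twist (lam : α → ZMod p) (A : α → G) (x : α) : G :=
  χ (.ofAdd (lam x)) * A x * (χ (.ofAdd (lam x)))⁻¹

theorem twist_twist (lam mu : α → ZMod p) (A : α → G) :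
    twist χ lam (twist χ mu A) = twist χ (lam + mu) A := by
  funext x
  simp only [twist, Pi.add_apply, ofAdd_add, map_mul]
  group

theorem twist_zero (A : α → G) : twist χ 0 A = A := by
  funext x
  simp [twist]

theorem map_twist (f : G →* H) (lam : α → ZMod p) (A : α → G) (x : α) :
    f (twist χ lam A x) = twist (f.comp χ) lam (f ∘ A) x := by
  simp [twist]

end Twist

namespace GaussDiagram

open Monoid

variable {D : GaussDiagram} {G : Type*} [Group G]

def redEval (A : D.Arc → G) (v : G) : FreeGroup D.RGen →* G :=
  FreeGroup.lift (Sum.elim A fun _ => v)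

@[simp]
theorem redEval_ga (A : D.Arc → G) (v : G) (x : D.Arc) : redEval A v (D.ga x) = A x :=
  FreeGroup.lift_apply_of

@[simp]
theorem redEval_gv (A : D.Arc → G) (v : G) : redEval A v D.gv = v :=
  FreeGroup.lift_apply_of

def RedRelsHoldAt (A : D.Arc → G) (v : G) (c : D.Chord) : Prop :=
  redEval A v (D.redRelOver c) = 1 ∧ redEval A v (D.redRelUnder c) = 1

def IsWirtingerAt (W : D.Arc → G) (c : D.Chord) : Prop :=
  W (D.uo c) = W (D.oi c) ^ D.sgn c * W (D.ui c) * W (D.oi c) ^ (-D.sgn c)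

section Twisted

variable {p : ℕ} (χ : Multiplicative (ZMod p) →* G) {lam : D.Arc → ZMod p}
  (h : D.IsAlexanderNumbering p lam) (A : D.Arc → G) {c : D.Chord}
include h

theorem redRelsHoldAt_iff_of_sign_true (hs : D.sign c = true) :
    RedRelsHoldAt A (χ (.ofAdd 1)) c ↔
      twist χ lam A (D.oo c) = twist χ lam A (D.oi c) ∧ IsWirtingerAt (twist χ lam A) c := by
  have hc := h c
  simp only [RedRelsHoldAt, IsWirtingerAt, redRelOver, redRelUnder, sgn, hs, if_true, map_mul,
    map_inv, redEval_ga, redEval_gv, zpow_neg, zpow_one] at hc ⊢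
  obtain ⟨hoi, hui, hui'⟩ := hc
  have hOver : twist χ lam A (D.oo c) * (twist χ lam A (D.oi c))⁻¹ =
      χ (.ofAdd (lam (D.oo c))) * (A (D.oo c) * (χ (.ofAdd 1) * A (D.oi c) *
        (χ (.ofAdd 1))⁻¹)⁻¹) * (χ (.ofAdd (lam (D.oo c))))⁻¹ := by
    simp only [twist]; rw [← hui, hui', χ.map_ofAdd_sub_one]; group
  have hUnder : twist χ lam A (D.uo c) * (twist χ lam A (D.oi c) * twist χ lam A (D.ui c) *
        (twist χ lam A (D.oi c))⁻¹)⁻¹ =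
      χ (.ofAdd (lam (D.uo c))) * (A (D.uo c) * (A (D.oi c) * (χ (.ofAdd 1))⁻¹ * A (D.ui c) *
        χ (.ofAdd 1) * (A (D.oi c))⁻¹)⁻¹) * (χ (.ofAdd (lam (D.uo c))))⁻¹ := by
    simp only [twist]; rw [← hoi, hui', χ.map_ofAdd_sub_one]; group
  rw [eq_one_iff_of_mul_inv_eq_conj hOver, eq_one_iff_of_mul_inv_eq_conj hUnder]

theorem redRelsHoldAt_iff_of_sign_false (hs : D.sign c = false) :
    RedRelsHoldAt A (χ (.ofAdd 1)) c ↔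
      twist χ lam A (D.oo c) = twist χ lam A (D.oi c) ∧ IsWirtingerAt (twist χ lam A) c := by
  have hc := h c
  simp only [RedRelsHoldAt, IsWirtingerAt, redRelOver, redRelUnder, sgn, hs,
    Bool.false_eq_true, if_false, map_mul, map_inv, redEval_ga, redEval_gv, zpow_neg, zpow_one,
    inv_inv] at hc ⊢
  obtain ⟨hui, hoi, hoi'⟩ := hc
  have hOver : twist χ lam A (D.oi c) * (twist χ lam A (D.oo c))⁻¹ =
      χ (.ofAdd (lam (D.oi c))) * (A (D.oi c) * (χ (.ofAdd 1) * A (D.oo c) *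
        (χ (.ofAdd 1))⁻¹)⁻¹) * (χ (.ofAdd (lam (D.oi c))))⁻¹ := by
    simp only [twist]; rw [hoi', hui, χ.map_ofAdd_sub_one]; group
  -- The under relator is conjugate to the Wirtinger relator with `oo` in place of `oi`.
  have hUnder : twist χ lam A (D.ui c) * (twist χ lam A (D.oo c) * twist χ lam A (D.uo c) *
        (twist χ lam A (D.oo c))⁻¹)⁻¹ =
      χ (.ofAdd (lam (D.ui c))) * (A (D.ui c) * (A (D.oo c) * (χ (.ofAdd 1))⁻¹ * A (D.uo c) *
        χ (.ofAdd 1) * (A (D.oo c))⁻¹)⁻¹) * (χ (.ofAdd (lam (D.ui c))))⁻¹ := by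
    simp only [twist]; rw [← hoi, hoi', ← hui, χ.map_ofAdd_sub_one]; group
  rw [eq_one_iff_of_mul_inv_eq_conj hOver, eq_one_iff_of_mul_inv_eq_conj hUnder, eq_comm]
  refine and_congr_right fun hW => ?_
  rw [← hW]
  constructor <;> intro e <;> rw [e] <;> group

theorem redRelsHoldAt_iff (c : D.Chord) :
    RedRelsHoldAt A (χ (.ofAdd 1)) c ↔
      twist χ lam A (D.oo c) = twist χ lam A (D.oi c) ∧ IsWirtingerAt (twist χ lam A) c := by
  cases hs : D.sign c
  exacts [redRelsHoldAt_iff_of_sign_false χ h A hs, redRelsHoldAt_iff_of_sign_true χ h A hs]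

end Twisted

theorem la_oo (c : D.Chord) : D.la (D.oo c) = D.la (D.oi c) :=
  Quotient.sound (Relation.EqvGen.symm _ _ (Relation.EqvGen.rel _ _ ⟨c, rfl, rfl⟩))

def liftLongArc {β : Type*} (f : D.Arc → β) (hf : ∀ c, f (D.oo c) = f (D.oi c)) :
    D.LongArc → β :=
  Quotient.lift f fun _ _ hxy =>
    Setoid.eqvGen_le (s := Setoid.ker f) (by rintro _ _ ⟨c, rfl, rfl⟩; exact (hf c).symm) hxy

@[simp]
theorem liftLongArc_la {β : Type*} (f : D.Arc → β) (hf : ∀ c, f (D.oo c) = f (D.oi c))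
    (x : D.Arc) : liftLongArc f hf (D.la x) = f x :=
  rfl

theorem lift_knotRel_eq_one_iff (B : D.LongArc → G) (c : D.Chord) :
    FreeGroup.lift B (D.knotRel c) = 1 ↔ IsWirtingerAt (B ∘ D.la) c := by
  simp only [knotRel, map_mul, map_inv, map_zpow, FreeGroup.lift_apply_of, mul_inv_eq_one]
  rfl

theorem IsWirtingerAt.map {H : Type*} [Group H] {W : D.Arc → G} {c : D.Chord}
    (hW : IsWirtingerAt W c) (f : G →* H) : IsWirtingerAt (f ∘ W) c := by
  simpa only [IsWirtingerAt, Function.comp_apply, map_mul, map_zpow] using congrArg f hW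

def knotOf (l : D.LongArc) : D.KnotGroup := PresentedGroup.of l

theorem isWirtingerAt_knotOf (c : D.Chord) : IsWirtingerAt (knotOf ∘ D.la) c :=
  (lift_knotRel_eq_one_iff _ c).1 (by
    rw [← FreeGroup.lift_unique (f := knotOf) (PresentedGroup.mk D.knotRels) fun _ => rfl]
    exact PresentedGroup.one_of_mem ⟨c, rfl⟩)

def knotLift (B : D.LongArc → G) (hB : ∀ c, IsWirtingerAt (B ∘ D.la) c) : D.KnotGroup →* G :=
  PresentedGroup.toGroup (rels := D.knotRels) (f := B) (by
    rintro _ ⟨c, rfl⟩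
    exact (lift_knotRel_eq_one_iff B c).2 (hB c))

@[simp]
theorem knotLift_knotOf (B : D.LongArc → G) (hB : ∀ c, IsWirtingerAt (B ∘ D.la) c)
    (l : D.LongArc) : knotLift B hB (knotOf l) = B l :=
  PresentedGroup.toGroup.of _

theorem knotGroup_hom_ext {f f' : D.KnotGroup →* G}
    (h : ∀ x : D.Arc, f (knotOf (D.la x)) = f' (knotOf (D.la x))) : f = f' :=
  PresentedGroup.ext fun l => Quotient.inductionOn l h

def redLift (A : D.Arc → G) (v : G) (hA : ∀ c, RedRelsHoldAt A v c) : D.RedGroup →* G :=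
  PresentedGroup.toGroup (rels := D.redRels) (f := Sum.elim A fun _ => v) (by
    intro r hr
    obtain ⟨c, rfl | rfl⟩ := hr
    exacts [(hA c).1, (hA c).2])

@[simp]
theorem redLift_redOf_inl (A : D.Arc → G) (v : G) (hA : ∀ c, RedRelsHoldAt A v c) (x : D.Arc) :
    redLift A v hA (D.redOf (Sum.inl x)) = A x :=
  PresentedGroup.toGroup.of _

@[simp]
theorem redLift_redOf_inr (A : D.Arc → G) (v : G) (hA : ∀ c, RedRelsHoldAt A v c) :
    redLift A v hA (D.redOf (Sum.inr ())) = v :=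
  PresentedGroup.toGroup.of _

theorem redGroup_hom_ext {f f' : D.RedGroup →* G}
    (hA : ∀ x, f (D.redOf (Sum.inl x)) = f' (D.redOf (Sum.inl x)))
    (hv : f (D.redOf (Sum.inr ())) = f' (D.redOf (Sum.inr ()))) : f = f' :=
  PresentedGroup.ext (rels := D.redRels) (by
    rintro (x | ⟨⟩)
    exacts [hA x, hv])

theorem redRelsHoldAt_redGroup (f : D.RedGroup →* G) (c : D.Chord) :
    RedRelsHoldAt (fun x => f (D.redOf (Sum.inl x))) (f (D.redOf (Sum.inr ()))) c := by
  have hmk (w : FreeGroup D.RGen) :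
      redEval (fun x => f (D.redOf (Sum.inl x))) (f (D.redOf (Sum.inr ()))) w =
        f (PresentedGroup.mk D.redRels w) :=
    (FreeGroup.lift_unique (f.comp (PresentedGroup.mk D.redRels))
      (by rintro (x | ⟨⟩) <;> rfl)).symm
  rw [RedRelsHoldAt, hmk, hmk,
    PresentedGroup.one_of_mem (show D.redRelOver c ∈ D.redRels from ⟨c, Or.inl rfl⟩),
    PresentedGroup.one_of_mem (show D.redRelUnder c ∈ D.redRels from ⟨c, Or.inr rfl⟩)]
  exact ⟨map_one f, map_one f⟩

variable (D) (p : ℕ)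

abbrev RedQuot : Type := D.RedGroup ⧸ Subgroup.normalClosure {(D.redOf (Sum.inr ())) ^ p}

def redQuotArc (x : D.Arc) : D.RedQuot p := QuotientGroup.mk (D.redOf (Sum.inl x))

def redQuotV : D.RedQuot p := QuotientGroup.mk (D.redOf (Sum.inr ()))

theorem redQuotV_pow : D.redQuotV p ^ p = 1 := by
  rw [redQuotV, ← QuotientGroup.mk_pow, QuotientGroup.eq_one_iff]
  exact Subgroup.subset_normalClosure rfl

def redQuotZMod : Multiplicative (ZMod p) →* D.RedQuot p :=
  zmodPowHom _ (D.redQuotV_pow p)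

theorem redQuotZMod_ofAdd_one : D.redQuotZMod p (.ofAdd 1) = D.redQuotV p :=
  zmodPowHom_ofAdd_one _ _

variable {D p}

def redQuotLift (A : D.Arc → G) (v : G) (hA : ∀ c, RedRelsHoldAt A v c) (hv : v ^ p = 1) :
    D.RedQuot p →* G :=
  QuotientGroup.lift _ (redLift A v hA) (Subgroup.normalClosure_le_normal (by
    rintro _ rfl
    rw [SetLike.mem_coe, MonoidHom.mem_ker, map_pow, redLift_redOf_inr, hv]))

@[simp]
theorem redQuotLift_redQuotArc (A : D.Arc → G) (v : G) (hA : ∀ c, RedRelsHoldAt A v c)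
    (hv : v ^ p = 1) (x : D.Arc) : redQuotLift A v hA hv (D.redQuotArc p x) = A x :=
  redLift_redOf_inl A v hA x

@[simp]
theorem redQuotLift_redQuotV (A : D.Arc → G) (v : G) (hA : ∀ c, RedRelsHoldAt A v c)
    (hv : v ^ p = 1) : redQuotLift A v hA hv (D.redQuotV p) = v :=
  redLift_redOf_inr A v hA

theorem redQuot_hom_ext {f f' : D.RedQuot p →* G}
    (hA : ∀ x, f (D.redQuotArc p x) = f' (D.redQuotArc p x))
    (hv : f (D.redQuotV p) = f' (D.redQuotV p)) : f = f' :=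
  QuotientGroup.monoidHom_ext _ (redGroup_hom_ext hA hv)

variable {lam : D.Arc → ZMod p}

theorem twist_redQuotArc_relations (h : D.IsAlexanderNumbering p lam) (c : D.Chord) :
    twist (D.redQuotZMod p) lam (D.redQuotArc p) (D.oo c) =
        twist (D.redQuotZMod p) lam (D.redQuotArc p) (D.oi c) ∧
      IsWirtingerAt (twist (D.redQuotZMod p) lam (D.redQuotArc p)) c :=
  (redRelsHoldAt_iff _ h _ c).1 <| by
    rw [redQuotZMod_ofAdd_one]
    exact redRelsHoldAt_redGroup (QuotientGroup.mk' _) c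

def redQuotLongArc (h : D.IsAlexanderNumbering p lam) : D.LongArc → D.RedQuot p :=
  liftLongArc (twist (D.redQuotZMod p) lam (D.redQuotArc p))
    fun c => (twist_redQuotArc_relations h c).1

theorem isWirtingerAt_redQuotLongArc (h : D.IsAlexanderNumbering p lam) (c : D.Chord) :
    IsWirtingerAt (redQuotLongArc h ∘ D.la) c :=
  (twist_redQuotArc_relations h c).2

def coprodToRedQuot (h : D.IsAlexanderNumbering p lam) :
    Coprod D.KnotGroup (Multiplicative (ZMod p)) →* D.RedQuot p :=
  Coprod.lift (knotLift (redQuotLongArc h) (isWirtingerAt_redQuotLongArc h)) (D.redQuotZMod p)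

theorem coprodToRedQuot_inl_knotOf_la (h : D.IsAlexanderNumbering p lam) (x : D.Arc) :
    coprodToRedQuot h (Coprod.inl (knotOf (D.la x))) =
      twist (D.redQuotZMod p) lam (D.redQuotArc p) x := by
  rw [coprodToRedQuot, Coprod.lift_apply_inl, knotLift_knotOf, redQuotLongArc, liftLongArc_la]

theorem coprodToRedQuot_comp_inr (h : D.IsAlexanderNumbering p lam) :
    (coprodToRedQuot h).comp Coprod.inr = D.redQuotZMod p :=
  Coprod.lift_comp_inr _ _

variable (lam) in
def coprodArc : D.Arc → Coprod D.KnotGroup (Multiplicative (ZMod p)) :=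
  twist Coprod.inr (-lam) fun x => Coprod.inl (knotOf (D.la x))

theorem twist_coprodArc :
    twist Coprod.inr lam (coprodArc lam) = fun x => Coprod.inl (knotOf (D.la x)) := by
  rw [coprodArc, twist_twist, add_neg_cancel, twist_zero]

theorem redRelsHoldAt_coprodArc (h : D.IsAlexanderNumbering p lam) (c : D.Chord) :
    RedRelsHoldAt (coprodArc lam) (Coprod.inr (.ofAdd 1)) c :=
  (redRelsHoldAt_iff _ h (coprodArc lam) c).2 <| by
    rw [twist_coprodArc]
    exact ⟨congrArg (Coprod.inl ∘ knotOf) (la_oo c), (isWirtingerAt_knotOf c).map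
      (Coprod.inl : D.KnotGroup →* Coprod D.KnotGroup (Multiplicative (ZMod p)))⟩

def redQuotToCoprod (h : D.IsAlexanderNumbering p lam) :
    D.RedQuot p →* Coprod D.KnotGroup (Multiplicative (ZMod p)) :=
  redQuotLift (coprodArc lam) (Coprod.inr (.ofAdd 1)) (redRelsHoldAt_coprodArc h) <| by
    rw [← map_pow, ← ofAdd_nsmul, nsmul_one, ZMod.natCast_self, ofAdd_zero, map_one]

theorem redQuotToCoprod_comp_redQuotZMod (h : D.IsAlexanderNumbering p lam) :
    (redQuotToCoprod h).comp (D.redQuotZMod p) = Coprod.inr :=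
  MonoidHom.ext_multiplicative_zmod <| by
    rw [MonoidHom.comp_apply, redQuotZMod_ofAdd_one, redQuotToCoprod, redQuotLift_redQuotV]

theorem redQuotToCoprod_comp_redQuotArc (h : D.IsAlexanderNumbering p lam) :
    redQuotToCoprod h ∘ D.redQuotArc p = coprodArc lam :=
  funext (redQuotLift_redQuotArc _ _ _ _)

theorem redQuotToCoprod_comp_coprodToRedQuot (h : D.IsAlexanderNumbering p lam) :
    (redQuotToCoprod h).comp (coprodToRedQuot h) = MonoidHom.id _ := by
  have hinr : (redQuotToCoprod h).comp ((coprodToRedQuot h).comp Coprod.inr) = Coprod.inr := by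
    rw [coprodToRedQuot_comp_inr, redQuotToCoprod_comp_redQuotZMod]
  refine Coprod.hom_ext (knotGroup_hom_ext fun x => ?_) hinr
  calc redQuotToCoprod h (coprodToRedQuot h (Coprod.inl (knotOf (D.la x))))
      = twist Coprod.inr lam (coprodArc lam) x := by
        rw [coprodToRedQuot_inl_knotOf_la, map_twist, redQuotToCoprod_comp_redQuotZMod,
          redQuotToCoprod_comp_redQuotArc]
    _ = Coprod.inl (knotOf (D.la x)) := congrFun twist_coprodArc x

theorem coprodToRedQuot_comp_redQuotToCoprod (h : D.IsAlexanderNumbering p lam) :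
    (coprodToRedQuot h).comp (redQuotToCoprod h) = MonoidHom.id _ := by
  refine redQuot_hom_ext (fun x => ?_) ?_
  · calc coprodToRedQuot h (redQuotToCoprod h (D.redQuotArc p x))
        = twist (D.redQuotZMod p) (-lam) (twist (D.redQuotZMod p) lam (D.redQuotArc p)) x := by
          rw [redQuotToCoprod, redQuotLift_redQuotArc, coprodArc, map_twist,
            coprodToRedQuot_comp_inr]
          congr 1
          exact funext (coprodToRedQuot_inl_knotOf_la h)
      _ = D.redQuotArc p x := by rw [twist_twist, neg_add_cancel, twist_zero]
  · rw [MonoidHom.comp_apply, redQuotToCoprod, redQuotLift_redQuotV, ← MonoidHom.comp_apply,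
      coprodToRedQuot_comp_inr, redQuotZMod_ofAdd_one, MonoidHom.id_apply]

def redQuotEquivCoprod (h : D.IsAlexanderNumbering p lam) :
    D.RedQuot p ≃* Coprod D.KnotGroup (Multiplicative (ZMod p)) :=
  MonoidHom.toMulEquiv (redQuotToCoprod h) (coprodToRedQuot h)
    (coprodToRedQuot_comp_redQuotToCoprod h) (redQuotToCoprod_comp_coprodToRedQuot h)

end GaussDiagram

theorem redGroup_quot_iso_of_modp_general (D : GaussDiagram) (p : ℕ)
    (lam : D.Arc → ZMod p) (h : D.IsAlexanderNumbering p lam) :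
    Nonempty ((D.RedGroup ⧸
        Subgroup.normalClosure {(D.redOf (Sum.inr ())) ^ p}) ≃*
      Monoid.Coprod D.KnotGroup (Multiplicative (ZMod p))) :=
  ⟨GaussDiagram.redQuotEquivCoprod h⟩

/-- If a Gauss diagram admits a mod `p` Alexander numbering, `p ≥ 2`,
then the quotient of the reduced virtual knot group by the normal closure of `v^p` is
isomorphic to the free product `G_D * ℤ/p`. -/
theorem redGroup_quot_iso_of_modp (D : GaussDiagram) (p : ℕ) (hp : 2 ≤ p)
    (lam : D.Arc → ZMod p) (h : D.IsAlexanderNumbering p lam) :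
    Nonempty ((D.RedGroup ⧸
        Subgroup.normalClosure {(D.redOf (Sum.inr ())) ^ p}) ≃*
      Monoid.Coprod D.KnotGroup (Multiplicative (ZMod p))) :=
  redGroup_quot_iso_of_modp_general D p lam h
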